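/- arXiv:2409.09830 — 2 statements merged into one kernel-verified Lean document; each statement's English description precedes it below -/
import Mathlib

section
/- Let p ≥ 2 and c ≥ 1 be integers, let ℓ ≥ 1, and let g₁, …, g_ℓ be 2×2 integer matrices each of whose entries has absolute value at most c. Suppose the product P = g₁ · g₂ ⋯ g_ℓ satisfies P ≠ I but p divides every entry of P − I. Then 2^{ℓ−1} · c^ℓ ≥ p − 1. -/
lemma margulis_prod_entry_bound (c : ℤ) (hc : 1 ≤ c) :
    ∀ (L : List (Matrix (Fin 2) (Fin 2) ℤ)),
      (∀ A ∈ L, ∀ r s : Fin 2, |A r s| ≤ c) →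
      ∀ i j : Fin 2, |L.prod i j| ≤ 2 ^ (L.length - 1) * c ^ L.length := by
  intro L
  induction L with
  | nil =>
    intro _ i j
    simp [Matrix.one_apply]
    split <;> simp
  | cons A L ih =>
    intro hmem i j
    have hA : ∀ r s : Fin 2, |A r s| ≤ c := hmem A List.mem_cons_self
    have hL : ∀ B ∈ L, ∀ r s : Fin 2, |B r s| ≤ c :=
      fun B hB => hmem B (List.mem_cons_of_mem _ hB)
    have hprod : (A :: L).prod = A * L.prod := List.prod_cons
    rw [hprod, Matrix.mul_apply, Fin.sum_univ_two]
    have hbnd := ih hL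
    match L with
    | [] =>
      simp only [List.prod_nil] at *
      have h0 : |A i 0 * (1 : Matrix (Fin 2) (Fin 2) ℤ) 0 j| ≤ c * 1 := by
        rw [abs_mul]
        exact mul_le_mul (hA i 0) (by simp [Matrix.one_apply]; split <;> simp)
          (abs_nonneg _) (by linarith)
      have h1 : |A i 1 * (1 : Matrix (Fin 2) (Fin 2) ℤ) 1 j| ≤ c * 1 := by
        rw [abs_mul]
        exact mul_le_mul (hA i 1) (by simp [Matrix.one_apply]; split <;> simp)
          (abs_nonneg _) (by linarith)
      -- but in fact only one of the two terms is nonzero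
      have : |A i 0 * (1 : Matrix (Fin 2) (Fin 2) ℤ) 0 j +
              A i 1 * (1 : Matrix (Fin 2) (Fin 2) ℤ) 1 j| ≤ c := by
        fin_cases j <;> simp [Matrix.one_apply] <;> [exact hA i 0; exact hA i 1]
      simpa using this
    | B :: L' =>
      have hn : (B :: L').length = L'.length + 1 := rfl
      set n := L'.length + 1 with hndef
      rw [hn] at hbnd
      have hB : (0:ℤ) ≤ 2 ^ (n - 1) * c ^ n := by positivity
      have key : ∀ k : Fin 2, |A i k * (B :: L').prod k j| ≤ c * (2 ^ (n - 1) * c ^ n) := by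
        intro k
        rw [abs_mul]
        exact mul_le_mul (hA i k) (hbnd k j) (abs_nonneg _) (by linarith)
      calc |A i 0 * (B :: L').prod 0 j + A i 1 * (B :: L').prod 1 j|
          ≤ |A i 0 * (B :: L').prod 0 j| + |A i 1 * (B :: L').prod 1 j| := abs_add_le _ _
        _ ≤ c * (2 ^ (n - 1) * c ^ n) + c * (2 ^ (n - 1) * c ^ n) := by
            exact add_le_add (key 0) (key 1)
        _ = 2 ^ ((A :: B :: L').length - 1) * c ^ (A :: B :: L').length := by
            simp only [List.length_cons, hndef, Nat.add_sub_cancel]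
            ring

/-- **Margulis's girth estimate (core inequality).** If `g 0, …, g (ℓ-1)` are
2×2 integer matrices whose entries all have absolute value at most `c ≥ 1`, and
their product `P` satisfies `P ≠ I` but `P ≡ I (mod p)` entrywise for an integer
`p ≥ 2`, then `2^(ℓ−1) · c^ℓ ≥ p − 1`. -/
theorem margulis_length_bound (p c : ℤ) (hp : 2 ≤ p) (hc : 1 ≤ c)
    (ℓ : ℕ) (hℓ : 1 ≤ ℓ) (g : Fin ℓ → Matrix (Fin 2) (Fin 2) ℤ)
    (hg : ∀ (i : Fin ℓ) (r s : Fin 2), |g i r s| ≤ c)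
    (hne : (List.ofFn g).prod ≠ 1)
    (hdvd : ∀ i j : Fin 2, p ∣ ((List.ofFn g).prod - 1) i j) :
    p - 1 ≤ 2 ^ (ℓ - 1) * c ^ ℓ := by
  set P := (List.ofFn g).prod with hP
  obtain ⟨i, j, hij⟩ : ∃ i j : Fin 2, (P - 1) i j ≠ 0 := by
    by_contra h
    push_neg at h
    apply hne
    ext i j
    have := h i j
    simp [Matrix.sub_apply] at this
    linarith [this]
  have hple : p ≤ |(P - 1) i j| :=
    Int.le_of_dvd (abs_pos.mpr hij) ((dvd_abs _ _).mpr (hdvd i j))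
  have hmem : ∀ A ∈ List.ofFn g, ∀ r s : Fin 2, |A r s| ≤ c := by
    intro A hA r s
    obtain ⟨k, rfl⟩ := List.mem_ofFn.mp hA
    exact hg k r s
  have hbound := margulis_prod_entry_bound c hc (List.ofFn g) hmem i j
  rw [List.length_ofFn] at hbound
  have hone : |(1 : Matrix (Fin 2) (Fin 2) ℤ) i j| ≤ 1 := by
    simp [Matrix.one_apply]; split <;> simp
  have : |(P - 1) i j| ≤ |P i j| + |(1 : Matrix (Fin 2) (Fin 2) ℤ) i j| := by
    simpa [Matrix.sub_apply] using abs_sub (P i j) ((1 : Matrix (Fin 2) (Fin 2) ℤ) i j)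
  linarith
end

section
/- Let r ≥ 1, let g : Fin r → SL(2, ℤ) be such that the induced homomorphism FreeGroup (Fin r) → SL(2, ℤ) (sending the i-th generator to g i) is injective, and suppose every entry of every g i and of every (g i)⁻¹ has absolute value at most c, where c ≥ 1. Let p ≥ 2 be a prime and let π : SL(2, ℤ) → SL(2, ZMod p) be the reduction-mod-p homomorphism. If w ∈ FreeGroup (Fin r) is a nontrivial element of word length ℓ whose image under the induced homomorphism FreeGroup (Fin r) → SL(2, ZMod p) (sending the i-th generator to π(g i)) is the identity, then 2^{ℓ−1} · c^ℓ ≥ p − 1. -/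
private lemma prod_entry_bound (c : ℤ) (hc : 1 ≤ c) :
    ∀ (L : List (Matrix (Fin 2) (Fin 2) ℤ)), L ≠ [] →
    (∀ A ∈ L, ∀ a b : Fin 2, |A a b| ≤ c) →
    ∀ a b : Fin 2, |L.prod a b| ≤ 2 ^ (L.length - 1) * c ^ L.length := by
  intro L
  induction L with
  | nil => simp
  | cons A L ih =>
    intro _ hbd a b
    rcases List.eq_nil_or_concat L with rfl | hne
    · simpa using hbd A (by simp) a b
    have hLne : L ≠ [] := by rcases hne with ⟨l, x, rfl⟩; simp
    have hA : ∀ a b : Fin 2, |A a b| ≤ c := hbd A (by simp)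
    have hL : ∀ B ∈ L, ∀ a b : Fin 2, |B a b| ≤ c := fun B hB => hbd B (by simp [hB])
    have hP := ih hLne hL
    set n := L.length with hn
    have hn1 : 1 ≤ n := by
      rcases hne with ⟨l, x, rfl⟩; simp [hn]
    have hK : (0:ℤ) ≤ 2 ^ (n - 1) * c ^ n := by positivity
    have hcpos : (0:ℤ) ≤ c := le_trans zero_le_one hc
    have key : |(A :: L).prod a b| ≤ 2 * (c * (2 ^ (n - 1) * c ^ n)) := by
      rw [List.prod_cons, Matrix.mul_apply, Fin.sum_univ_two]
      calc |A a 0 * L.prod 0 b + A a 1 * L.prod 1 b|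
          ≤ |A a 0 * L.prod 0 b| + |A a 1 * L.prod 1 b| := abs_add_le _ _
        _ ≤ c * (2 ^ (n - 1) * c ^ n) + c * (2 ^ (n - 1) * c ^ n) := by
            gcongr <;> rw [abs_mul] <;>
              exact mul_le_mul (hA _ _) (hP _ _) (abs_nonneg _) hcpos
        _ = 2 * (c * (2 ^ (n - 1) * c ^ n)) := by ring
    refine key.trans (le_of_eq ?_)
    have hlen : (A :: L).length = n + 1 := by simp [hn]
    have h2 : n - 1 + 1 = n := Nat.succ_pred_eq_of_pos hn1
    rw [hlen]
    calc 2 * (c * (2 ^ (n-1) * c^n)) = 2^(n-1) * 2 * (c^n * c) := by ring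
      _ = 2^(n-1+1) * c^(n+1) := by rw [pow_succ, pow_succ]
      _ = 2^(n+1-1) * c^(n+1) := by rw [h2, Nat.add_sub_cancel]

/-- **Margulis's girth argument.** Let `g : Fin r → SL(2, ℤ)` generate a free
subgroup (the induced map from the free group is injective), with all entries of
the `g i` and `(g i)⁻¹` bounded by `c ≥ 1` in absolute value. If a nontrivial
word `w` of length `ℓ` maps to the identity in `SL(2, ZMod p)` after reducing
the generators mod a prime `p ≥ 2`, then `2^(ℓ−1) · c^ℓ ≥ p − 1`. -/
theorem margulis_relation_length_bound (r : ℕ) (hr : 1 ≤ r)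
    (g : Fin r → Matrix.SpecialLinearGroup (Fin 2) ℤ)
    (hfree : Function.Injective (FreeGroup.lift g))
    (c : ℤ) (hc : 1 ≤ c)
    (hg : ∀ (i : Fin r) (a b : Fin 2),
      |((g i : Matrix (Fin 2) (Fin 2) ℤ)) a b| ≤ c)
    (hginv : ∀ (i : Fin r) (a b : Fin 2),
      |(((g i)⁻¹ : Matrix.SpecialLinearGroup (Fin 2) ℤ) :
          Matrix (Fin 2) (Fin 2) ℤ) a b| ≤ c)
    (p : ℕ) (hp : p.Prime)
    (w : FreeGroup (Fin r)) (hw : w ≠ 1) (ℓ : ℕ) (hℓ : w.toWord.length = ℓ)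
    (hrel : FreeGroup.lift
      (fun i => Matrix.SpecialLinearGroup.map (Int.castRingHom (ZMod p)) (g i))
      w = 1) :
    (p : ℤ) - 1 ≤ 2 ^ (ℓ - 1) * c ^ ℓ := by
  set φ := Int.castRingHom (ZMod p)
  set M := FreeGroup.lift g w with hM
  -- M ≠ 1
  have hM1 : M ≠ 1 := fun h => hw (hfree (by simpa using h))
  -- map φ M = 1
  have hmap : Matrix.SpecialLinearGroup.map φ M = 1 := by
    have : (Matrix.SpecialLinearGroup.map φ).comp (FreeGroup.lift g)
        = FreeGroup.lift (fun i => Matrix.SpecialLinearGroup.map φ (g i)) := by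
      apply FreeGroup.ext_hom
      intro a; simp
    have := DFunLike.congr_fun this w
    simp only [MonoidHom.comp_apply] at this
    rw [hM, this, hrel]
  -- expression of M as list product
  set L : List (Matrix (Fin 2) (Fin 2) ℤ) :=
    w.toWord.map (fun x => ((cond x.2 (g x.1) (g x.1)⁻¹ :
        Matrix.SpecialLinearGroup (Fin 2) ℤ) : Matrix (Fin 2) (Fin 2) ℤ)) with hLdef
  have hMprod : (M : Matrix (Fin 2) (Fin 2) ℤ) = L.prod := by
    have h1 : M = (w.toWord.map fun x => cond x.2 (g x.1) (g x.1)⁻¹).prod := by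
      conv_lhs => rw [hM, ← FreeGroup.mk_toWord (x := w)]
      exact FreeGroup.lift_mk
    rw [h1, hLdef]
    generalize w.toWord = T
    induction T with
    | nil => simp
    | cons x T ih =>
        simp only [List.map_cons, List.prod_cons, Matrix.SpecialLinearGroup.coe_mul, ih]
  have hLlen : L.length = ℓ := by simp [hLdef, hℓ]
  have hLne : L ≠ [] := by
    rw [hLdef]
    simp only [ne_eq, List.map_eq_nil_iff]
    rw [FreeGroup.toWord_eq_nil_iff]
    exact hw
  have hbd : ∀ A ∈ L, ∀ a b : Fin 2, |A a b| ≤ c := by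
    intro A hA a b
    rw [hLdef] at hA
    simp only [List.mem_map] at hA
    obtain ⟨x, _, rfl⟩ := hA
    cases x.2
    · exact hginv x.1 a b
    · exact hg x.1 a b
  have hbound : ∀ a b : Fin 2, |(M : Matrix (Fin 2) (Fin 2) ℤ) a b| ≤ 2 ^ (ℓ - 1) * c ^ ℓ := by
    intro a b
    rw [hMprod, ← hLlen]
    exact prod_entry_bound c hc L hLne hbd a b
  -- find an entry where M differs from 1
  have hne : (M : Matrix (Fin 2) (Fin 2) ℤ) ≠ (1 : Matrix (Fin 2) (Fin 2) ℤ) := by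
    intro h
    exact hM1 (Subtype.ext h)
  obtain ⟨a, b, hab⟩ : ∃ a b : Fin 2,
      (M : Matrix (Fin 2) (Fin 2) ℤ) a b ≠ (1 : Matrix (Fin 2) (Fin 2) ℤ) a b := by
    by_contra h
    push_neg at h
    exact hne (by ext a b; exact h a b)
  -- reduction: entries agree mod p
  have hcast : ((((M : Matrix (Fin 2) (Fin 2) ℤ)) a b : ℤ) : ZMod p)
      = (((1 : Matrix (Fin 2) (Fin 2) ℤ) a b : ℤ) : ZMod p) := by
    have := congrArg (fun N : Matrix.SpecialLinearGroup (Fin 2) (ZMod p) =>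
      (N : Matrix (Fin 2) (Fin 2) (ZMod p)) a b) hmap
    simp only [Matrix.SpecialLinearGroup.map_apply_coe, RingHom.mapMatrix_apply,
      Matrix.map_apply] at this
    rw [show ((1 : Matrix.SpecialLinearGroup (Fin 2) (ZMod p)) :
        Matrix (Fin 2) (Fin 2) (ZMod p)) = 1 from rfl] at this
    by_cases hab' : a = b <;> simp [hab', Matrix.one_apply, φ] at this ⊢ <;>
      simpa using this
  have hdvd : (p : ℤ) ∣ ((M : Matrix (Fin 2) (Fin 2) ℤ) a b
      - (1 : Matrix (Fin 2) (Fin 2) ℤ) a b) := by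
    have h := (ZMod.intCast_eq_intCast_iff _ _ _).mp hcast
    have h2 := Int.ModEq.dvd h
    exact (dvd_sub_comm).mp h2
  have hppos : (0:ℤ) < |(M : Matrix (Fin 2) (Fin 2) ℤ) a b
      - (1 : Matrix (Fin 2) (Fin 2) ℤ) a b| := by
    rw [abs_pos, sub_ne_zero]; exact hab
  have hple : (p : ℤ) ≤ |(M : Matrix (Fin 2) (Fin 2) ℤ) a b
      - (1 : Matrix (Fin 2) (Fin 2) ℤ) a b| :=
    Int.le_of_dvd hppos ((dvd_abs _ _).mpr hdvd)
  have hone : |(1 : Matrix (Fin 2) (Fin 2) ℤ) a b| ≤ 1 := by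
    by_cases hab' : a = b <;> simp [Matrix.one_apply, hab']
  have := hple.trans ((abs_sub _ _).trans (add_le_add (hbound a b) hone))
  linarith
end
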